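/- Let C_n(x,y,z) = Σ_{σ ∈ Q_n} x^{asc(σ)} y^{plat(σ)} z^{des(σ)}, where asc, plat, des count ascents, plateaux, descents of a Stirling permutation with boundary σ_0 = σ_{2n+1} = 0. Then C_{n+1}(x,y,z) = xyz(∂/∂x + ∂/∂y + ∂/∂z) C_n(x,y,z) with C_1(x,y,z) = xyz. -/

import Mathlib

/-- A Stirling permutation of the multiset {1,1,2,2,...,n,n}. -/
def IsStirling (n : ℕ) (σ : List ℕ) : Prop :=
  (∀ m : ℕ, σ.count m = if 1 ≤ m ∧ m ≤ n then 2 else 0) ∧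
  (∀ i s j : ℕ, i < s → s < j → j < σ.length →
    σ.getD i 0 = σ.getD j 0 → σ.getD i 0 < σ.getD s 0)

/-- Entry of `σ` in 1-based indexing, with the boundary convention
`σ_0 = 0` and `σ_i = 0` for `i > length σ`. -/
def ent (σ : List ℕ) (i : ℕ) : ℕ := if i = 0 then 0 else σ.getD (i - 1) 0

/-- Number of ascents: indices `1 ≤ i ≤ 2n` with `σ_{i-1} < σ_i`. -/
def ascQ (σ : List ℕ) : ℕ :=
  ((Finset.Icc 1 σ.length).filter fun i => ent σ (i - 1) < ent σ i).card

/-- Number of plateaux: indices `1 ≤ i ≤ 2n-1` with `σ_i = σ_{i+1}`. -/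
def platQ (σ : List ℕ) : ℕ :=
  ((Finset.Icc 1 (σ.length - 1)).filter fun i => ent σ i = ent σ (i + 1)).card

/-- Number of descents: indices `1 ≤ i ≤ 2n` with `σ_i > σ_{i+1}` (with `σ_{2n+1} = 0`). -/
def desQ (σ : List ℕ) : ℕ :=
  ((Finset.Icc 1 σ.length).filter fun i => ent σ (i + 1) < ent σ i).card

open MvPolynomial

/-- The trivariate second-order Eulerian polynomial
`C_n(x,y,z) = Σ_{σ ∈ Q_n} x^{asc σ} y^{plat σ} z^{des σ}`, with variables
`x = X 0`, `y = X 1`, `z = X 2`. -/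
noncomputable def Cpoly (n : ℕ) : MvPolynomial (Fin 3) ℚ :=
  ∑ᶠ σ ∈ {σ : List ℕ | IsStirling n σ},
    (X 0 : MvPolynomial (Fin 3) ℚ) ^ ascQ σ * X 1 ^ platQ σ * X 2 ^ desQ σ

/-! Every `τ ∈ Q_{n+1}` arises in exactly one way by inserting the block `(n+1)(n+1)` into one
of the `2n+1` gaps of some `σ ∈ Q_n`: the two copies of the maximum must be adjacent, since
anything between them would have to be larger. With the boundary zeros, every gap of `σ` is an
ascent, a plateau or a descent, and `asc`, `plat`, `des` count exactly these gaps. Inserting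
into a gap destroys it and creates one ascent `(σ_j, n+1)`, one plateau `(n+1, n+1)` and one
descent `(n+1, σ_{j+1})`. Hence, if `σ` contributes `x^a y^p z^d`, its insertions contribute
`a x^a y^{p+1} z^{d+1} + p x^{a+1} y^p z^{d+1} + d x^{a+1} y^{p+1} z^d`, which is
`xyz (∂x + ∂y + ∂z) (x^a y^p z^d)`. -/

open Finset

def doubledList : ℕ → List ℕ
  | 0 => []
  | n + 1 => doubledList n ++ [n + 1, n + 1]

lemma count_doubledList (n m : ℕ) :
    (doubledList n).count m = if 1 ≤ m ∧ m ≤ n then 2 else 0 := by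
  induction n with
  | zero => simp [doubledList]; omega
  | succ n ih =>
    simp only [doubledList, List.count_append, ih, List.count_cons, List.count_nil]
    split_ifs <;> simp_all <;> omega

lemma length_doubledList (n : ℕ) : (doubledList n).length = 2 * n := by
  induction n with
  | zero => rfl
  | succ n ih =>
    simp only [doubledList, List.length_append, ih, List.length_cons, List.length_nil]
    omega

namespace IsStirling

variable {n : ℕ} {σ : List ℕ}

lemma perm (h : IsStirling n σ) : σ.Perm (doubledList n) :=
  List.perm_iff_count.mpr fun a => by rw [h.1 a, count_doubledList]

lemma length_eq (h : IsStirling n σ) : σ.length = 2 * n :=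
  h.perm.length_eq.trans (length_doubledList n)

lemma mem_bounds (h : IsStirling n σ) {a : ℕ} (ha : a ∈ σ) : 1 ≤ a ∧ a ≤ n := by
  have hcount := h.1 a
  have hpos := List.count_pos_iff.mpr ha
  by_contra hc
  rw [if_neg hc] at hcount
  omega

lemma succ_notMem (h : IsStirling n σ) : n + 1 ∉ σ := fun hmem => by
  have := h.mem_bounds hmem
  omega

lemma getD_le (h : IsStirling n σ) (k : ℕ) : σ.getD k 0 ≤ n := by
  by_cases hk : k < σ.length
  · rw [List.getD_eq_getElem _ _ hk]
    exact (h.mem_bounds (List.getElem_mem hk)).2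
  · rw [List.getD_eq_default _ _ (not_lt.mp hk)]
    exact Nat.zero_le n

lemma ent_le (h : IsStirling n σ) (i : ℕ) : ent σ i ≤ n := by
  unfold ent
  split
  · exact Nat.zero_le n
  · exact h.getD_le _

lemma finite (n : ℕ) : {σ : List ℕ | IsStirling n σ}.Finite :=
  (doubledList n).permutations.toFinset.finite_toSet.subset fun σ hσ => by
    simpa using hσ.perm

end IsStirling

lemma ent_zero (σ : List ℕ) : ent σ 0 = 0 := rfl

lemma ent_succ (σ : List ℕ) (k : ℕ) : ent σ (k + 1) = σ.getD k 0 := rfl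

lemma ent_of_length_lt {σ : List ℕ} {i : ℕ} (h : σ.length < i) : ent σ i = 0 := by
  obtain ⟨k, rfl⟩ : ∃ k, i = k + 1 := ⟨i - 1, by omega⟩
  exact List.getD_eq_default _ _ (by omega)

lemma ent_ne_zero {σ : List ℕ} (h0 : 0 ∉ σ) {i : ℕ} (h1 : 1 ≤ i) (h2 : i ≤ σ.length) :
    ent σ i ≠ 0 := by
  obtain ⟨k, rfl⟩ : ∃ k, i = k + 1 := ⟨i - 1, by omega⟩
  rw [ent_succ, List.getD_eq_getElem _ _ (by omega)]
  exact fun h => h0 (h ▸ List.getElem_mem _)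

/-- Gap `j ≤ length σ` lies between `σ_j` and `σ_{j+1}` of the zero-padded word; `r` selects
the ascent, plateau or descent gaps. -/
def gaps (r : ℕ → ℕ → Prop) [DecidableRel r] (σ : List ℕ) : Finset ℕ :=
  (range (σ.length + 1)).filter fun j => r (ent σ j) (ent σ (j + 1))

lemma ascQ_eq_card_gaps (σ : List ℕ) : ascQ σ = #(gaps (· < ·) σ) := by
  refine card_nbij' (· - 1) (· + 1) ?_ ?_ ?_ ?_
  · intro i hi
    simp only [coe_filter, mem_Icc, Set.mem_ofPred_eq, gaps, mem_range] at hi ⊢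
    rw [Nat.sub_add_cancel hi.1.1]
    exact ⟨by omega, hi.2⟩
  · intro j hj
    simp only [coe_filter, mem_Icc, Set.mem_ofPred_eq, gaps, mem_range] at hj ⊢
    have hlast : j ≠ σ.length := by
      rintro rfl
      simp [ent_of_length_lt (Nat.lt_succ_self σ.length)] at hj
    exact ⟨⟨by omega, by omega⟩, by simpa using hj.2⟩
  · intro i hi
    simp only [coe_filter, mem_Icc, Set.mem_ofPred_eq] at hi
    show i - 1 + 1 = i
    omega
  · intro j _
    simp

lemma desQ_eq_card_gaps (σ : List ℕ) : desQ σ = #(gaps (fun a b => b < a) σ) := by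
  refine congrArg Finset.card (Finset.ext fun j => ?_)
  simp only [gaps, mem_filter, mem_Icc, mem_range]
  constructor
  · rintro ⟨⟨_, hj⟩, hdes⟩
    exact ⟨by omega, hdes⟩
  · rintro ⟨hj, hdes⟩
    have hj0 : j ≠ 0 := by
      rintro rfl
      simp [ent_zero] at hdes
    exact ⟨⟨by omega, by omega⟩, hdes⟩

lemma platQ_eq_card_gaps {σ : List ℕ} (h0 : 0 ∉ σ) (hne : σ ≠ []) :
    platQ σ = #(gaps (· = ·) σ) := by
  have hlen : 1 ≤ σ.length := List.length_pos_iff.mpr hne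
  refine congrArg Finset.card (Finset.ext fun j => ?_)
  simp only [gaps, mem_filter, mem_Icc, mem_range]
  constructor
  · rintro ⟨⟨_, hj⟩, hplat⟩
    exact ⟨by omega, hplat⟩
  · rintro ⟨hj, hplat⟩
    have hj0 : j ≠ 0 := by
      rintro rfl
      exact ent_ne_zero h0 le_rfl hlen (hplat.symm.trans (ent_zero σ))
    have hjlast : j ≠ σ.length := by
      rintro rfl
      exact ent_ne_zero h0 hlen le_rfl (hplat.trans (ent_of_length_lt (by omega)))
    exact ⟨⟨by omega, by omega⟩, hplat⟩

def List.insertPair (σ : List ℕ) (m j : ℕ) : List ℕ := σ.take j ++ m :: m :: σ.drop j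

section insertPair

variable {σ : List ℕ} {m j : ℕ}

lemma List.length_insertPair (hj : j ≤ σ.length) :
    (σ.insertPair m j).length = σ.length + 2 := by
  simp only [List.insertPair, List.length_append, List.length_take, List.length_cons,
    List.length_drop]
  omega

lemma List.insertPair_perm : (σ.insertPair m j).Perm (m :: m :: σ) := by
  have h : (σ.insertPair m j).Perm (m :: m :: (σ.take j ++ σ.drop j)) :=
    List.perm_middle.trans (List.perm_middle.cons m)
  rwa [List.take_append_drop] at h

lemma List.getD_insertPair (hj : j ≤ σ.length) (k : ℕ) :
    (σ.insertPair m j).getD k 0 =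
      if k < j then σ.getD k 0 else if k < j + 2 then m else σ.getD (k - 2) 0 := by
  have htake : (σ.take j).length = j := List.length_take_of_le hj
  unfold List.insertPair
  split_ifs with h1 h2
  · rw [List.getD_append _ _ _ _ (by omega)]
    simp [List.getD_eq_getElem?_getD, h1]
  · rw [List.getD_append_right _ _ _ _ (by omega), htake]
    rcases (by omega : k - j = 0 ∨ k - j = 1) with h | h <;> simp [h]
  · rw [List.getD_append_right _ _ _ _ (by omega), htake]
    obtain ⟨t, ht⟩ : ∃ t, k - j = t + 2 := ⟨k - j - 2, by omega⟩
    simp only [ht, List.getD_eq_getElem?_getD, List.getElem?_cons_succ, List.getElem?_drop]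
    congr 2
    omega

lemma List.idxOf_insertPair (hm : m ∉ σ) (hj : j ≤ σ.length) :
    (σ.insertPair m j).idxOf m = j := by
  rw [List.insertPair, List.idxOf_append_of_notMem (fun h => hm (List.take_subset _ _ h)),
    List.idxOf_cons_self, List.length_take]
  omega

lemma List.insertPair_inj {σ' : List ℕ} {j' : ℕ} (hm : m ∉ σ) (hm' : m ∉ σ')
    (hj : j ≤ σ.length) (hj' : j' ≤ σ'.length) (h : σ.insertPair m j = σ'.insertPair m j') :
    σ = σ' ∧ j = j' := by
  obtain rfl : j = j' := by
    rw [← List.idxOf_insertPair hm hj, h, List.idxOf_insertPair hm' hj']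
  obtain ⟨htake, hdrop⟩ := List.append_inj h (by simp; omega)
  have hdrop' : σ.drop j = σ'.drop j := by simpa using hdrop
  exact ⟨by rw [← σ.take_append_drop j, ← σ'.take_append_drop j, htake, hdrop'], rfl⟩

lemma ent_insertPair_of_le (hj : j ≤ σ.length) {i : ℕ} (hi : i ≤ j) :
    ent (σ.insertPair m j) i = ent σ i := by
  rcases i with _ | k
  · rfl
  · rw [ent_succ, ent_succ, List.getD_insertPair hj, if_pos (by omega)]

lemma ent_insertPair_succ (hj : j ≤ σ.length) : ent (σ.insertPair m j) (j + 1) = m := by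
  rw [ent_succ, List.getD_insertPair hj, if_neg (by omega), if_pos (by omega)]

lemma ent_insertPair_add_two (hj : j ≤ σ.length) : ent (σ.insertPair m j) (j + 2) = m := by
  rw [ent_succ, List.getD_insertPair hj, if_neg (by omega), if_pos (by omega)]

lemma ent_insertPair_add_three (hj : j ≤ σ.length) (k : ℕ) :
    ent (σ.insertPair m j) (j + 3 + k) = ent σ (j + 1 + k) := by
  rw [show j + 3 + k = (j + 2 + k) + 1 by omega, show j + 1 + k = (j + k) + 1 by omega,
    ent_succ, ent_succ, List.getD_insertPair hj, if_neg (by omega), if_neg (by omega)]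
  congr 1
  omega

end insertPair

lemma card_gaps_insertPair (r : ℕ → ℕ → Prop) [DecidableRel r] {σ : List ℕ} {m j : ℕ}
    (hj : j ≤ σ.length) :
    #(gaps r (σ.insertPair m j)) + (if r (ent σ j) (ent σ (j + 1)) then 1 else 0) =
      #(gaps r σ) + ((if r (ent σ j) m then 1 else 0) + (if r m m then 1 else 0) +
        (if r m (ent σ (j + 1)) then 1 else 0)) := by
  obtain ⟨k, hk⟩ : ∃ k, σ.length = j + k := ⟨σ.length - j, by omega⟩
  simp only [gaps, card_filter, List.length_insertPair hj, hk]
  rw [show j + k + 2 + 1 = j + (3 + k) by omega, show j + k + 1 = j + (1 + k) by omega,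
    sum_range_add, sum_range_add, sum_range_add, sum_range_add]
  have hhead : ∀ i ∈ range j,
      (if r (ent (σ.insertPair m j) i) (ent (σ.insertPair m j) (i + 1)) then 1 else 0) =
        if r (ent σ i) (ent σ (i + 1)) then 1 else 0 := fun i hi => by
    rw [mem_range] at hi
    rw [ent_insertPair_of_le hj hi.le, ent_insertPair_of_le hj hi]
  have htail : ∀ x ∈ range k,
      (if r (ent (σ.insertPair m j) (j + (3 + x))) (ent (σ.insertPair m j) (j + (3 + x) + 1))
        then 1 else 0) =
        if r (ent σ (j + (1 + x))) (ent σ (j + (1 + x) + 1)) then 1 else 0 := fun x _ => by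
    rw [← add_assoc, show j + 3 + x + 1 = j + 3 + (x + 1) by omega,
      ent_insertPair_add_three hj, ent_insertPair_add_three hj]
    simp only [add_assoc]
  rw [sum_congr rfl hhead, sum_congr rfl htail]
  simp only [sum_range_succ, sum_range_zero, add_zero, zero_add, ent_insertPair_succ hj,
    ent_insertPair_add_two hj, ent_insertPair_add_three hj 0, ent_insertPair_of_le hj le_rfl]
  omega

lemma card_gaps_insertPair_succ {σ : List ℕ} {n j : ℕ} (hj : j ≤ σ.length)
    (hl : ent σ j ≤ n) (hr : ent σ (j + 1) ≤ n) :
    #(gaps (· < ·) (σ.insertPair (n + 1) j)) + (if ent σ j < ent σ (j + 1) then 1 else 0) =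
        #(gaps (· < ·) σ) + 1 ∧
      #(gaps (· = ·) (σ.insertPair (n + 1) j)) + (if ent σ j = ent σ (j + 1) then 1 else 0) =
        #(gaps (· = ·) σ) + 1 ∧
      #(gaps (fun a b => b < a) (σ.insertPair (n + 1) j)) +
          (if ent σ (j + 1) < ent σ j then 1 else 0) =
        #(gaps (fun a b => b < a) σ) + 1 := by
  have hA := card_gaps_insertPair (· < ·) (m := n + 1) hj
  have hP := card_gaps_insertPair (· = ·) (m := n + 1) hj
  have hD := card_gaps_insertPair (fun a b => b < a) (m := n + 1) hj
  simp only at hA hP hD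
  split_ifs at hA hP hD ⊢ <;> omega

namespace IsStirling

variable {n : ℕ} {σ : List ℕ} {j : ℕ}

lemma insertPair (h : IsStirling n σ) (hj : j ≤ σ.length) :
    IsStirling (n + 1) (σ.insertPair (n + 1) j) := by
  constructor
  · intro k
    rw [List.insertPair_perm.count_eq]
    have hk := h.1 k
    simp only [List.count_cons]
    split_ifs at hk ⊢ <;> simp_all <;> omega
  · intro a s b has hsb hb heq
    rw [List.length_insertPair hj] at hb
    simp only [List.getD_insertPair hj] at heq ⊢
    have := h.getD_le a; have := h.getD_le s; have := h.getD_le b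
    have := h.getD_le (a - 2); have := h.getD_le (s - 2); have := h.getD_le (b - 2)
    split_ifs at heq ⊢ <;> first
      | omega
      | exact h.2 _ _ _ (by omega) (by omega) (by omega) heq

lemma of_insertPair (h : IsStirling (n + 1) (σ.insertPair (n + 1) j)) (hj : j ≤ σ.length) :
    IsStirling n σ := by
  constructor
  · intro k
    have hk := h.1 k
    rw [List.insertPair_perm.count_eq] at hk
    simp only [List.count_cons] at hk
    split_ifs at hk ⊢ <;> simp_all <;> omega
  · have hlift : ∀ k, σ.getD k 0 =
        (σ.insertPair (n + 1) j).getD (if k < j then k else k + 2) 0 := fun k => by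
      rw [List.getD_insertPair hj]
      split_ifs <;> first | rfl | omega
    intro a s b has hsb hb heq
    rw [hlift a, hlift b] at heq
    rw [hlift a, hlift s]
    have hlen := List.length_insertPair (m := n + 1) hj
    refine h.2 _ _ _ ?_ ?_ ?_ heq <;> split_ifs <;> omega

lemma exists_eq_insertPair {τ : List ℕ} (h : IsStirling (n + 1) τ) :
    ∃ (σ : List ℕ) (j : ℕ), j ≤ σ.length ∧ τ = σ.insertPair (n + 1) j := by
  have hdup : [n + 1, n + 1].Sublist τ :=
    List.duplicate_iff_sublist.mp (List.duplicate_iff_two_le_count.mpr (by simp [h.1]))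
  obtain ⟨r₁, r₂, rfl, h₁, h₂⟩ := List.cons_sublist_iff.mp hdup
  obtain ⟨α, β₁, rfl⟩ := List.append_of_mem h₁
  obtain ⟨β₂, γ, rfl⟩ := List.append_of_mem (List.singleton_sublist.mp h₂)
  rw [show α ++ (n + 1) :: β₁ ++ (β₂ ++ (n + 1) :: γ) =
    α ++ (n + 1) :: ((β₁ ++ β₂) ++ (n + 1) :: γ) by simp] at h ⊢
  generalize β₁ ++ β₂ = β at h ⊢
  obtain rfl : β = [] := by
    rcases β with _ | ⟨b, β⟩
    · rfl
    · have hb := h.mem_bounds (a := b) (by simp)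
      have hlt : n + 1 < b := by
        simpa [List.getD_eq_getElem?_getD] using
          h.2 α.length (α.length + 1) (α.length + (β.length + 2)) (by omega) (by omega)
            (by simp)
      omega
  refine ⟨α ++ γ, α.length, by simp, ?_⟩
  simp [List.insertPair]

end IsStirling

lemma isStirling_one_iff {σ : List ℕ} : IsStirling 1 σ ↔ σ = [1, 1] := by
  constructor
  · intro h
    have hperm : σ.Perm (List.replicate 2 1) := h.perm
    exact List.perm_replicate.mp hperm
  · rintro rfl
    refine ⟨fun k => ?_, fun i s j _ _ hj _ => by simp at hj; omega⟩
    simp only [List.count_cons, List.count_nil]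
    split_ifs <;> simp_all <;> omega

lemma sum_isStirling_succ_eq_sum_insertPair {M : Type*} [AddCommMonoid M] (n : ℕ)
    (f : List ℕ → M) :
    ∑ τ ∈ (IsStirling.finite (n + 1)).toFinset, f τ =
      ∑ p ∈ (IsStirling.finite n).toFinset ×ˢ range (2 * n + 1),
        f (p.1.insertPair (n + 1) p.2) := by
  symm
  refine sum_nbij (fun p => p.1.insertPair (n + 1) p.2) ?_ ?_ ?_ (fun _ _ => rfl)
  · rintro ⟨σ, j⟩ hp
    simp only [mem_product, Set.Finite.mem_toFinset, Set.mem_ofPred_eq, mem_range] at hp ⊢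
    exact hp.1.insertPair (by rw [hp.1.length_eq]; omega)
  · rintro ⟨σ, j⟩ hp ⟨σ', j'⟩ hp' heq
    simp only [mem_coe, mem_product, Set.Finite.mem_toFinset, Set.mem_ofPred_eq,
      mem_range] at hp hp'
    obtain ⟨rfl, rfl⟩ := List.insertPair_inj hp.1.succ_notMem hp'.1.succ_notMem
      (by rw [hp.1.length_eq]; omega) (by rw [hp'.1.length_eq]; omega) heq
    rfl
  · intro τ hτ
    simp only [mem_coe, Set.Finite.mem_toFinset, Set.mem_ofPred_eq] at hτ
    obtain ⟨σ, j, hj, rfl⟩ := hτ.exists_eq_insertPair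
    have hσ := hτ.of_insertPair hj
    refine ⟨(σ, j), ?_, rfl⟩
    simp only [mem_coe, mem_product, Set.Finite.mem_toFinset, Set.mem_ofPred_eq, mem_range]
    exact ⟨hσ, by rw [← hσ.length_eq]; omega⟩

noncomputable def stirlingMonomial (σ : List ℕ) : MvPolynomial (Fin 3) ℚ :=
  X 0 ^ ascQ σ * X 1 ^ platQ σ * X 2 ^ desQ σ

lemma X_mul_pderiv_X_pow {R ι : Type*} [CommSemiring R] (i : ι) (k : ℕ) :
    (X i : MvPolynomial ι R) * pderiv i (X i ^ k) = (k : MvPolynomial ι R) * X i ^ k := by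
  rw [pderiv_pow, pderiv_X_self]
  rcases k with _ | k
  · simp
  · push_cast
    ring

lemma pderiv_X_pow_of_ne {R ι : Type*} [CommSemiring R] {i i' : ι} (h : i' ≠ i) (k : ℕ) :
    pderiv i ((X i' : MvPolynomial ι R) ^ k) = 0 := by
  rw [pderiv_pow, pderiv_X_of_ne h, mul_zero]

lemma xyz_mul_sum_pderiv_monomial {R : Type*} [CommRing R] (a p d : ℕ) :
    (X 0 * X 1 * X 2 : MvPolynomial (Fin 3) R) *
        (pderiv 0 (X 0 ^ a * X 1 ^ p * X 2 ^ d) + pderiv 1 (X 0 ^ a * X 1 ^ p * X 2 ^ d) +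
          pderiv 2 (X 0 ^ a * X 1 ^ p * X 2 ^ d)) =
      (a : MvPolynomial (Fin 3) R) * (X 0 ^ a * X 1 ^ (p + 1) * X 2 ^ (d + 1)) +
        (p : MvPolynomial (Fin 3) R) * (X 0 ^ (a + 1) * X 1 ^ p * X 2 ^ (d + 1)) +
          (d : MvPolynomial (Fin 3) R) * (X 0 ^ (a + 1) * X 1 ^ (p + 1) * X 2 ^ d) := by
  simp (disch := decide) only [pderiv_mul, pderiv_X_pow_of_ne (R := R), mul_zero, zero_mul,
    add_zero, zero_add]
  linear_combination (X 1 * X 2 * X 1 ^ p * X 2 ^ d) * X_mul_pderiv_X_pow (R := R) (0 : Fin 3) a +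
    (X 0 * X 2 * X 0 ^ a * X 2 ^ d) * X_mul_pderiv_X_pow (R := R) (1 : Fin 3) p +
    (X 0 * X 1 * X 0 ^ a * X 1 ^ p) * X_mul_pderiv_X_pow (R := R) (2 : Fin 3) d

lemma IsStirling.stirlingMonomial_eq {n : ℕ} {σ : List ℕ} (h : IsStirling n σ)
    (hn : 1 ≤ n) :
    stirlingMonomial σ = X 0 ^ #(gaps (· < ·) σ) * X 1 ^ #(gaps (· = ·) σ) *
      X 2 ^ #(gaps (fun a b => b < a) σ) := by
  have h0 : 0 ∉ σ := fun h0 => absurd (h.mem_bounds h0).1 (by omega)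
  have hne : σ ≠ [] := List.ne_nil_of_length_pos (by rw [h.length_eq]; omega)
  rw [stirlingMonomial, ascQ_eq_card_gaps, platQ_eq_card_gaps h0 hne, desQ_eq_card_gaps]

lemma IsStirling.sum_stirlingMonomial_insertPair {n : ℕ} {σ : List ℕ} (h : IsStirling n σ)
    (hn : 1 ≤ n) :
    ∑ j ∈ range (σ.length + 1), stirlingMonomial (σ.insertPair (n + 1) j) =
      X 0 * X 1 * X 2 *
        (pderiv 0 (stirlingMonomial σ) + pderiv 1 (stirlingMonomial σ) +
          pderiv 2 (stirlingMonomial σ)) := by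
  set A := #(gaps (· < ·) σ)
  set P := #(gaps (· = ·) σ)
  set D := #(gaps (fun a b => b < a) σ)
  have hgap : ∀ j ∈ range (σ.length + 1), stirlingMonomial (σ.insertPair (n + 1) j) =
      (if ent σ j < ent σ (j + 1) then X 0 ^ A * X 1 ^ (P + 1) * X 2 ^ (D + 1) else 0) +
      (if ent σ j = ent σ (j + 1) then X 0 ^ (A + 1) * X 1 ^ P * X 2 ^ (D + 1) else 0) +
      (if ent σ (j + 1) < ent σ j then X 0 ^ (A + 1) * X 1 ^ (P + 1) * X 2 ^ D else 0) := by
    intro j hj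
    replace hj : j ≤ σ.length := Nat.lt_succ_iff.mp (mem_range.mp hj)
    have key := card_gaps_insertPair_succ hj (h.ent_le j) (h.ent_le (j + 1))
    rw [(h.insertPair hj).stirlingMonomial_eq (by omega)]
    rcases lt_trichotomy (ent σ j) (ent σ (j + 1)) with hlt | heq | hgt
    · simp only [hlt, hlt.ne, hlt.not_gt, ↓reduceIte, add_zero,
        Nat.add_right_cancel_iff] at key ⊢
      rw [key.1, key.2.1, key.2.2]
    · simp only [heq, lt_self_iff_false, ↓reduceIte, add_zero, zero_add,
        Nat.add_right_cancel_iff] at key ⊢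
      rw [key.1, key.2.1, key.2.2]
    · simp only [hgt, hgt.ne', hgt.not_gt, ↓reduceIte, add_zero, zero_add,
        Nat.add_right_cancel_iff] at key ⊢
      rw [key.1, key.2.1, key.2.2]
  rw [sum_congr rfl hgap, sum_add_distrib, sum_add_distrib, ← sum_filter, ← sum_filter,
    ← sum_filter, sum_const, sum_const, sum_const, h.stirlingMonomial_eq hn,
    xyz_mul_sum_pderiv_monomial, nsmul_eq_mul, nsmul_eq_mul, nsmul_eq_mul]
  rfl

lemma Cpoly_eq_sum (n : ℕ) :
    Cpoly n = ∑ σ ∈ (IsStirling.finite n).toFinset, stirlingMonomial σ :=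
  finsum_mem_eq_finite_toFinset_sum _ _

theorem Cpoly_recurrence :
    Cpoly 1 = X 0 * X 1 * X 2 ∧
    ∀ n : ℕ, 1 ≤ n →
      Cpoly (n + 1) =
        X 0 * X 1 * X 2 *
          (pderiv 0 (Cpoly n) + pderiv 1 (Cpoly n) + pderiv 2 (Cpoly n)) := by
  constructor
  · have hQ₁ : {σ : List ℕ | IsStirling 1 σ} = {[1, 1]} :=
      Set.ext fun _ => isStirling_one_iff
    rw [Cpoly, hQ₁, finsum_mem_singleton, show ascQ [1, 1] = 1 by decide,
      show platQ [1, 1] = 1 by decide, show desQ [1, 1] = 1 by decide, pow_one, pow_one, pow_one]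
  · intro n hn
    rw [Cpoly_eq_sum, sum_isStirling_succ_eq_sum_insertPair, sum_product, Cpoly_eq_sum,
      map_sum, map_sum, map_sum, ← sum_add_distrib, ← sum_add_distrib, mul_sum]
    refine sum_congr rfl fun σ hσ => ?_
    rw [Set.Finite.mem_toFinset] at hσ
    rw [← hσ.length_eq]
    exact hσ.sum_stirlingMonomial_insertPair hn
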